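/- Let E and V be finite-dimensional real vector spaces, k ≥ 2, and let μ : E → Λ^{k-1}V* and θ : E → Λ^{k}V* be linear maps into alternating forms on V. For u ∈ E let ω_u be the alternating k-form on E × V defined by ω_u((e₁,v₁),…,(e_k,v_k)) = Σ_{j=1}^{k} (−1)^{j+1} μ(e_j)(v₁,…,v̂_j,…,v_k) + θ(u)(v₁,…,v_k). Then the following are equivalent: (a) for every u ∈ E, dim Ker(ω_u) = dim Ker(μ) + dim Ker(μ^♯); (b) for every u ∈ E and every v ∈ Ker(μ^♯), the contraction i_v θ(u) lies in the range of μ (as a subspace of Λ^{k-1}V*). -/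
import Mathlib


open scoped BigOperators

/-- With `k = m + 2 ≥ 2`, the alternating `k`-form `ω_u` on `E × V` determined by linear
maps `μ : E → Λ^{k-1} V*`, `θ : E → Λ^{k} V*` and a point `u ∈ E`:
`ω_u((e₁,v₁),…,(e_k,v_k)) = Σ_{j} (−1)^{j+1} μ(e_j)(v₁,…,v̂_j,…,v_k) + θ(u)(v₁,…,v_k)`
(written with 0-based indices, so the sign is `(−1)^j`). -/
noncomputable def linOmegaU {E V : Type*} [AddCommGroup E] [Module ℝ E]
    [AddCommGroup V] [Module ℝ V] {m : ℕ}
    (μ : E →ₗ[ℝ] AlternatingMap ℝ V ℝ (Fin (m + 1)))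
    (θ : E →ₗ[ℝ] AlternatingMap ℝ V ℝ (Fin (m + 2))) (u : E)
    (w : Fin (m + 2) → E × V) : ℝ :=
  (∑ j : Fin (m + 2), (-1 : ℝ) ^ (j : ℕ) * μ (w j).1 (fun i => (w (j.succAbove i)).2))
    + θ u (fun j => (w j).2)

/-- `Ker(μ^♯) = { v ∈ V : μ(e′)(v,v₁,…,v_{k−2}) = 0 for all e′, v₁,…,v_{k−2} }`,
as a subspace of `V`. -/
def kerSharp {E V : Type*} [AddCommGroup E] [Module ℝ E] [AddCommGroup V] [Module ℝ V]
    {m : ℕ} (μ : E →ₗ[ℝ] AlternatingMap ℝ V ℝ (Fin (m + 1))) : Submodule ℝ V where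
  carrier := {v | ∀ (e : E) (vs : Fin m → V), μ e (Fin.cons v vs) = 0}
  zero_mem' := by
    intro e vs
    exact (μ e).toMultilinearMap.map_coord_zero (m := Fin.cons 0 vs) 0 (by simp)
  add_mem' := by
    intro a b ha hb e vs
    have h : μ e (Fin.cons (a + b) vs) = μ e (Fin.cons a vs) + μ e (Fin.cons b vs) :=
      (μ e).toMultilinearMap.cons_add vs a b
    rw [h, ha e vs, hb e vs, add_zero]
  smul_mem' := by
    intro c a ha e vs
    have h : μ e (Fin.cons (c • a) vs) = c • μ e (Fin.cons a vs) :=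
      (μ e).toMultilinearMap.cons_smul vs c a
    rw [h, ha e vs, smul_zero]


section StatementTwoAux

variable {E V : Type*} [AddCommGroup E] [Module ℝ E] [AddCommGroup V] [Module ℝ V] {m : ℕ}
  (μ : E →ₗ[ℝ] AlternatingMap ℝ V ℝ (Fin (m + 1)))
  (θ : E →ₗ[ℝ] AlternatingMap ℝ V ℝ (Fin (m + 2)))

private lemma linOmegaU_cons (u : E) (p : E × V) (ws : Fin (m + 1) → E × V) :
    linOmegaU μ θ u (Fin.cons p ws)
      = μ p.1 (fun i => (ws i).2)
        + (∑ j : Fin (m + 1), (-1 : ℝ) ^ ((j : ℕ) + 1) *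
            μ (ws j).1 (Fin.cons p.2 (fun i => (ws (j.succAbove i)).2)))
        + θ u (Fin.cons p.2 (fun i => (ws i).2)) := by
  unfold linOmegaU
  rw [Fin.sum_univ_succ]
  have h0 : (fun i => ((Fin.cons p ws : Fin (m+2) → E × V) ((0 : Fin (m+2)).succAbove i)).2)
      = fun i => (ws i).2 := by
    funext i; rw [Fin.zero_succAbove, Fin.cons_succ]
  have h1 : ∀ j : Fin (m+1),
      (fun i => ((Fin.cons p ws : Fin (m+2) → E × V) ((j.succ).succAbove i)).2)
      = Fin.cons p.2 (fun i => (ws (j.succAbove i)).2) := by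
    intro j; funext i
    refine Fin.cases ?_ (fun i' => ?_) i
    · rw [Fin.succ_succAbove_zero, Fin.cons_zero, Fin.cons_zero]
    · rw [Fin.succ_succAbove_succ, Fin.cons_succ, Fin.cons_succ]
  have h2 : (fun j => ((Fin.cons p ws : Fin (m+2) → E × V) j).2)
      = Fin.cons p.2 (fun i => (ws i).2) := by
    funext j
    refine Fin.cases ?_ (fun j' => ?_) j
    · rw [Fin.cons_zero, Fin.cons_zero]
    · rw [Fin.cons_succ, Fin.cons_succ]
  rw [h2]
  congr 1
  congr 1
  · rw [h0]; simp
  · refine Finset.sum_congr rfl fun j _ => ?_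
    rw [h1 j, Fin.cons_succ, Fin.val_succ]

private lemma mem_ker_iff (u : E) (p : E × V) :
    (∀ ws : Fin (m + 1) → E × V, linOmegaU μ θ u (Fin.cons p ws) = 0) ↔
      (p.2 ∈ kerSharp μ ∧
        ∀ vs : Fin (m + 1) → V, μ p.1 vs + θ u (Fin.cons p.2 vs) = 0) := by
  constructor
  · intro h
    constructor
    · intro e vs
      have key := h (Fin.cons (e, (0:V)) (fun i => ((0:E), vs i)))
      rw [linOmegaU_cons] at key
      set ws : Fin (m+1) → E × V := Fin.cons (e, (0:V)) (fun i => ((0:E), vs i)) with hws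
      have e2 : (fun i => (ws i).2) = Fin.cons (0:V) vs := by
        funext i
        refine Fin.cases ?_ (fun i' => ?_) i <;> simp [hws]
      have t1 : μ p.1 (fun i => (ws i).2) = 0 := by
        rw [e2]; exact (μ p.1).map_coord_zero 0 (by simp)
      have t3 : θ u (Fin.cons p.2 (fun i => (ws i).2)) = 0 := by
        rw [e2]
        refine (θ u).map_coord_zero ((0 : Fin (m+1)).succ) ?_
        rw [Fin.cons_succ, Fin.cons_zero]
      rw [t1, t3, Fin.sum_univ_succ] at key
      have tsum : ∑ j : Fin m, (-1 : ℝ) ^ ((j.succ : ℕ) + 1) *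
          μ (ws j.succ).1 (Fin.cons p.2 (fun i => (ws (j.succ.succAbove i)).2)) = 0 := by
        refine Finset.sum_eq_zero fun j _ => ?_
        have : (ws j.succ).1 = 0 := by simp [hws]
        rw [this]
        simp
      rw [tsum] at key
      have hw0 : (ws 0).1 = e := by simp [hws]
      have harg : (fun i => (ws ((0:Fin (m+1)).succAbove i)).2) = vs := by
        funext i; rw [Fin.zero_succAbove, hws, Fin.cons_succ]
      rw [hw0, harg] at key
      simpa using key
    · intro vs
      have key := h (fun i => ((0:E), vs i))
      rw [linOmegaU_cons] at key
      have tsum : ∑ j : Fin (m+1), (-1 : ℝ) ^ ((j : ℕ) + 1) *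
          μ ((fun i => ((0:E), vs i)) j).1
            (Fin.cons p.2 (fun i => ((fun i => ((0:E), vs i)) (j.succAbove i)).2)) = 0 := by
        refine Finset.sum_eq_zero fun j _ => ?_
        simp
      rw [tsum] at key
      simpa using key
  · rintro ⟨h1, h2⟩ ws
    rw [linOmegaU_cons]
    have tsum : ∑ j : Fin (m+1), (-1 : ℝ) ^ ((j : ℕ) + 1) *
        μ (ws j).1 (Fin.cons p.2 (fun i => (ws (j.succAbove i)).2)) = 0 := by
      refine Finset.sum_eq_zero fun j _ => ?_
      rw [h1 (ws j).1 _]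
      ring
    rw [tsum, add_zero]
    exact h2 _

/-- The linear map `(e, v) ↦ μ e + i_v θ(u)`. -/
private noncomputable def PsiMap (u : E) : E × V →ₗ[ℝ] AlternatingMap ℝ V ℝ (Fin (m + 1)) :=
  μ.comp (LinearMap.fst ℝ E V) + ((θ u).curryLeft).comp (LinearMap.snd ℝ E V)

private lemma PsiMap_apply (u : E) (p : E × V) :
    PsiMap μ θ u p = μ p.1 + (θ u).curryLeft p.2 := rfl

private lemma PsiMap_eq_zero_iff (u : E) (p : E × V) :
    PsiMap μ θ u p = 0 ↔
      ∀ vs : Fin (m + 1) → V, μ p.1 vs + θ u (Fin.cons p.2 vs) = 0 := by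
  rw [AlternatingMap.ext_iff]
  exact forall_congr' fun vs => Iff.rfl

/-- The kernel of `ω_u` as a submodule of `E × V`. -/
private noncomputable def Nsub (u : E) : Submodule ℝ (E × V) :=
  LinearMap.ker (PsiMap μ θ u) ⊓ Submodule.prod ⊤ (kerSharp μ)

/-- `{ v ∈ Ker(μ^♯) : i_v θ(u) ∈ range μ }`. -/
private noncomputable def Rsub (u : E) : Submodule ℝ V :=
  kerSharp μ ⊓ Submodule.comap ((θ u).curryLeft) (LinearMap.range μ)

private lemma map_Nsub (u : E) :
    (Nsub μ θ u).map (LinearMap.snd ℝ E V) = Rsub μ θ u := by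
  ext v
  simp only [Submodule.mem_map, Nsub, Rsub, Submodule.mem_inf, LinearMap.mem_ker,
    Submodule.mem_prod, Submodule.mem_comap, LinearMap.mem_range, Submodule.mem_top,
    true_and, LinearMap.snd_apply]
  constructor
  · rintro ⟨p, ⟨hker, hK⟩, rfl⟩
    refine ⟨hK, -p.1, ?_⟩
    have := hker
    rw [PsiMap_apply] at this
    rw [map_neg]
    linear_combination (norm := module) -this
  · rintro ⟨hK, e, he⟩
    refine ⟨(-e, v), ⟨?_, hK⟩, rfl⟩
    rw [PsiMap_apply]
    simp only [map_neg]
    rw [he]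
    abel

private lemma inf_Nsub (u : E) :
    Nsub μ θ u ⊓ LinearMap.ker (LinearMap.snd ℝ E V)
      = (LinearMap.ker μ).map (LinearMap.inl ℝ E V) := by
  ext p
  simp only [Submodule.mem_inf, Nsub, LinearMap.mem_ker, Submodule.mem_prod,
    Submodule.mem_map, Submodule.mem_top, true_and, LinearMap.snd_apply,
    LinearMap.inl_apply]
  constructor
  · rintro ⟨⟨hker, hK⟩, h2⟩
    refine ⟨p.1, ?_, ?_⟩
    · rw [PsiMap_apply, h2] at hker
      simpa using hker
    · exact Prod.ext rfl h2.symm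
  · rintro ⟨e, he, rfl⟩
    refine ⟨⟨?_, (kerSharp μ).zero_mem⟩, rfl⟩
    rw [PsiMap_apply]
    simp [he]

variable [FiniteDimensional ℝ E] [FiniteDimensional ℝ V]

private lemma finrank_Nsub (u : E) :
    Module.finrank ℝ (Nsub μ θ u)
      = Module.finrank ℝ (Rsub μ θ u) + Module.finrank ℝ (LinearMap.ker μ) := by
  set f := (LinearMap.snd ℝ E V).domRestrict (Nsub μ θ u)
  have h1 : Module.finrank ℝ (Nsub μ θ u)
      = Module.finrank ℝ (LinearMap.range f) + Module.finrank ℝ (LinearMap.ker f) :=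
    (LinearMap.finrank_range_add_finrank_ker f).symm
  have h2 : LinearMap.range f = Rsub μ θ u := by
    rw [LinearMap.range_domRestrict, map_Nsub]
  have h3 : Module.finrank ℝ (LinearMap.ker f) = Module.finrank ℝ (LinearMap.ker μ) := by
    have e1 : Module.finrank ℝ (LinearMap.ker f)
        = Module.finrank ℝ ((LinearMap.ker f).map (Nsub μ θ u).subtype) :=
      (Submodule.finrank_map_subtype_eq _ _).symm
    rw [e1]
    have e2 : (LinearMap.ker f).map (Nsub μ θ u).subtype
        = Nsub μ θ u ⊓ LinearMap.ker (LinearMap.snd ℝ E V) := by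
      rw [LinearMap.ker_domRestrict, Submodule.map_comap_subtype]
    rw [e2, inf_Nsub]
    exact (LinearEquiv.finrank_eq
      ((LinearMap.ker μ).equivMapOfInjective _ LinearMap.inl_injective)).symm
  rw [h1, h2, h3]

end StatementTwoAux

/-- the kernel of `ω_u` has dimension `dim Ker(μ) + dim Ker(μ^♯)` for every
`u ∈ E` iff for every `u ∈ E` and every `v ∈ Ker(μ^♯)` the contraction `i_v θ(u)` lies in
the range of `μ`.  (The kernel of `ω_u` is a linear subspace of `E × V`; its dimension is
expressed via `Set.finrank`, the dimension of the span of the set.) -/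

theorem statement2 {E V : Type*} [AddCommGroup E] [Module ℝ E] [FiniteDimensional ℝ E]
    [AddCommGroup V] [Module ℝ V] [FiniteDimensional ℝ V] (m : ℕ)
    (μ : E →ₗ[ℝ] AlternatingMap ℝ V ℝ (Fin (m + 1)))
    (θ : E →ₗ[ℝ] AlternatingMap ℝ V ℝ (Fin (m + 2))) :
    (∀ u : E,
        Set.finrank ℝ
            {p : E × V | ∀ ws : Fin (m + 1) → E × V, linOmegaU μ θ u (Fin.cons p ws) = 0}
          = Module.finrank ℝ (LinearMap.ker μ) + Module.finrank ℝ (kerSharp μ)) ↔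
      (∀ u : E, ∀ v ∈ kerSharp μ,
        ∃ e : E, ∀ vs : Fin (m + 1) → V, μ e vs = θ u (Fin.cons v vs)) := by
  refine forall_congr' fun u => ?_
  have hset : {p : E × V | ∀ ws : Fin (m + 1) → E × V, linOmegaU μ θ u (Fin.cons p ws) = 0}
      = ↑(Nsub μ θ u) := by
    ext p
    rw [Set.mem_setOf_eq, mem_ker_iff μ θ u p]
    simp only [SetLike.mem_coe, Nsub, Submodule.mem_inf, LinearMap.mem_ker,
      Submodule.mem_prod, Submodule.mem_top, true_and, PsiMap_eq_zero_iff]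
    exact and_comm
  rw [hset, Set.finrank, Submodule.span_eq, finrank_Nsub]
  constructor
  · intro h v hv
    have hR : Module.finrank ℝ (Rsub μ θ u) = Module.finrank ℝ (kerSharp μ) := by omega
    have heq : Rsub μ θ u = kerSharp μ :=
      Submodule.eq_of_le_of_finrank_eq inf_le_left hR
    have hv' : v ∈ Rsub μ θ u := heq ▸ hv
    obtain ⟨-, hc⟩ := Submodule.mem_inf.mp hv'
    obtain ⟨e, he⟩ := hc
    exact ⟨e, fun vs => by rw [he]; rfl⟩
  · intro H
    have heq : Rsub μ θ u = kerSharp μ := by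
      refine le_antisymm inf_le_left (le_inf le_rfl ?_)
      intro v hv
      obtain ⟨e, he⟩ := H v hv
      exact ⟨e, AlternatingMap.ext fun vs => he vs⟩
    rw [heq]
    omega
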